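/- Let 0 < r < 1 and let Θ = {log(1+δ) : δ ∈ ℂ, |δ| ≤ r} (principal logarithm). Then for any z_1, …, z_n ∈ Θ, the average (z_1 + ⋯ + z_n)/n belongs to Θ. -/

import Mathlib

/-!
Writing `w = x + iy`, the condition `|e^w - 1| ≤ r` reads
`e^x + (1 - r²) e^{-x} ≤ 2 cos y` after expanding the square and dividing by `e^x`, and for
`r < 1` the principal logarithm of `1 + δ` has `|y| < π/2`. So `Θ` is a sublevel set of
`e^x + (1 - r²) e^{-x} - 2 cos y`, which is convex on the strip `|y| < π/2` because `cos` is
concave there. Hence `Θ` is convex and contains every average of its points.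
-/

open Complex Set

lemma norm_exp_sub_one_le_iff {r : ℝ} (hr : 0 ≤ r) (w : ℂ) :
    ‖exp w - 1‖ ≤ r ↔
      Real.exp w.re + (1 - r ^ 2) * Real.exp (-w.re) ≤ 2 * Real.cos w.im := by
  have he : 0 < Real.exp w.re := Real.exp_pos _
  have hinv : Real.exp w.re * Real.exp (-w.re) = 1 := by
    rw [← Real.exp_add, add_neg_cancel, Real.exp_zero]
  have key : ‖exp w - 1‖ ^ 2 - r ^ 2 =
      Real.exp w.re * (Real.exp w.re + (1 - r ^ 2) * Real.exp (-w.re) - 2 * Real.cos w.im) := by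
    rw [Complex.sq_norm, normSq_apply]
    simp only [sub_re, sub_im, exp_re, exp_im, one_re, one_im, sub_zero]
    linear_combination Real.exp w.re ^ 2 * Real.sin_sq_add_cos_sq w.im - (1 - r ^ 2) * hinv
  rw [← sq_le_sq₀ (norm_nonneg _) hr, ← sub_nonpos, key, ← mul_zero (Real.exp w.re),
    mul_le_mul_iff_right₀ he, sub_nonpos]

lemma convexOn_exp_re_add_exp_neg_re_sub_cos_im {c : ℝ} (hc : 0 ≤ c) :
    ConvexOn ℝ (im ⁻¹' Ioo (-(Real.pi / 2)) (Real.pi / 2))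
      (fun w : ℂ ↦ Real.exp w.re + c * Real.exp (-w.re) - 2 * Real.cos w.im) := by
  have hS : Convex ℝ (im ⁻¹' Ioo (-(Real.pi / 2)) (Real.pi / 2)) :=
    (convex_Ioo _ _).linear_preimage imLm
  have h₁ : ConvexOn ℝ univ (fun w : ℂ ↦ Real.exp w.re) := convexOn_exp.comp_linearMap reLm
  have h₂ : ConvexOn ℝ univ (fun w : ℂ ↦ Real.exp (-w.re)) := convexOn_exp.comp_linearMap (-reLm)
  have h₃ : ConcaveOn ℝ (im ⁻¹' Ioo (-(Real.pi / 2)) (Real.pi / 2)) (fun w : ℂ ↦ Real.cos w.im) :=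
    (strictConcaveOn_cos_Icc.concaveOn.subset Ioo_subset_Icc_self (convex_Ioo _ _)).comp_linearMap
      imLm
  refine (((h₁.subset (subset_univ _) hS).add ((h₂.subset (subset_univ _) hS).smul hc)).add
      (h₃.neg.smul zero_le_two)).congr fun w _ ↦ ?_
  simp only [Pi.add_apply, Pi.neg_apply, smul_eq_mul]
  ring

lemma exists_log_one_add_eq_iff {r : ℝ} (hr : r < 1) (w : ℂ) :
    (∃ δ : ℂ, ‖δ‖ ≤ r ∧ w = log (1 + δ)) ↔ |w.im| < Real.pi / 2 ∧ ‖exp w - 1‖ ≤ r := by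
  constructor
  · rintro ⟨δ, hδ, rfl⟩
    have hre : 0 < (1 + δ).re := by
      have := neg_le_of_abs_le ((abs_re_le_norm δ).trans hδ)
      simp only [add_re, one_re]
      linarith
    rw [log_im, exp_log (fun h ↦ by simp [h] at hre), add_sub_cancel_left]
    exact ⟨abs_arg_lt_pi_div_two_iff.2 (.inl hre), hδ⟩
  · rintro ⟨him, hδ⟩
    obtain ⟨hlo, hhi⟩ := abs_lt.1 him
    refine ⟨exp w - 1, hδ, ?_⟩
    rw [add_sub_cancel, log_exp] <;> linarith [Real.pi_pos]

lemma convex_setOf_exists_log_one_add {r : ℝ} (hr₀ : 0 ≤ r) (hr₁ : r < 1) :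
    Convex ℝ {w : ℂ | ∃ δ : ℂ, ‖δ‖ ≤ r ∧ w = log (1 + δ)} := by
  have hΘ : {w : ℂ | ∃ δ : ℂ, ‖δ‖ ≤ r ∧ w = log (1 + δ)} =
      {w ∈ im ⁻¹' Ioo (-(Real.pi / 2)) (Real.pi / 2) |
        Real.exp w.re + (1 - r ^ 2) * Real.exp (-w.re) - 2 * Real.cos w.im ≤ 0} := by
    ext w
    simp only [mem_ofPred_eq, exists_log_one_add_eq_iff hr₁, norm_exp_sub_one_le_iff hr₀,
      mem_preimage, mem_Ioo, abs_lt, sub_nonpos]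
  rw [hΘ]
  exact (convexOn_exp_re_add_exp_neg_re_sub_cos_im (by nlinarith)).convex_le 0

theorem stmt_3 (r : ℝ) (hr0 : 0 < r) (hr1 : r < 1) (n : ℕ) (hn : 1 ≤ n)
    (z : Fin n → ℂ)
    (hz : ∀ i, z i ∈ {w : ℂ | ∃ δ : ℂ, ‖δ‖ ≤ r ∧ w = Complex.log (1 + δ)}) :
    (∑ i, z i) / n ∈ {w : ℂ | ∃ δ : ℂ, ‖δ‖ ≤ r ∧ w = Complex.log (1 + δ)} := by
  have hn₀ : (n : ℝ) ≠ 0 := Nat.cast_ne_zero.2 (by omega)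
  have hmean : (∑ i, z i) / n = ∑ i, (n : ℝ)⁻¹ • z i := by
    rw [← Finset.smul_sum, Complex.real_smul, div_eq_inv_mul]
    push_cast
    rfl
  rw [hmean]
  refine (convex_setOf_exists_log_one_add hr0.le hr1).sum_mem (fun _ _ ↦ by positivity) ?_
    fun i _ ↦ hz i
  simp [hn₀]
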